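/- If two first-order terms are unifiable, then there exists a most general unifier θ of them, i.e., a unifier such that every other unifier is an instance of θ. -/

import Mathlib

/-! First-order terms over variables `ℕ` and function symbols `ℕ` (each symbol
used with the arity of its argument list), substitutions, unification, and
flows `t ⊣ u` (with `Var(t) ⊆ Var(u)`, considered up to renaming). -/

/-- First-order terms. -/
inductive Term where
  | var : ℕ → Term
  | fn : ℕ → List Term → Term

mutual
/-- Apply a substitution to a term. -/
def Term.subst (θ : ℕ → Term) : Term → Term
  | .var n => θ n
  | .fn f ts => .fn f (Term.substList θ ts)
/-- Apply a substitution to a list of terms. -/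
def Term.substList (θ : ℕ → Term) : List Term → List Term
  | [] => []
  | t :: ts => Term.subst θ t :: Term.substList θ ts
end

mutual
/-- Variables occurring in a term. -/
def Term.vars : Term → Set ℕ
  | .var n => {n}
  | .fn _ ts => Term.varsList ts
/-- Variables occurring in a list of terms. -/
def Term.varsList : List Term → Set ℕ
  | [] => ∅
  | t :: ts => Term.vars t ∪ Term.varsList ts
end

/-- `θ` is a unifier of `t` and `u`. -/
def IsUnifier (θ : ℕ → Term) (t u : Term) : Prop := t.subst θ = u.subst θ

/-- `θ'` is an instance of `θ` (factors through `θ`). -/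
def InstanceOf (θ' θ : ℕ → Term) : Prop := ∃ ρ, ∀ n, θ' n = (θ n).subst ρ

/-- `θ` is a most general unifier of `t` and `u`. -/
def IsMGU (θ : ℕ → Term) (t u : Term) : Prop :=
  IsUnifier θ t u ∧ ∀ θ', IsUnifier θ' t u → InstanceOf θ' θ

/-- Apply a renaming (a bijection on variables) to a term. -/
def Term.rename (α : ℕ ≃ ℕ) (t : Term) : Term := t.subst fun n => .var (α n)

/-- Two terms are matchable if renamings of them with disjoint sets of
variables are unifiable. -/
def Matchable (t u : Term) : Prop :=
  ∃ α β : ℕ ≃ ℕ, Disjoint (t.rename α).vars (u.rename β).vars ∧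
    ∃ θ, IsUnifier θ (t.rename α) (u.rename β)

/-- A flow `t ⊣ u` with `Var(t) ⊆ Var(u)`. -/
structure RFlow where
  lhs : Term
  rhs : Term
  sub : lhs.vars ⊆ rhs.vars

instance : Inhabited RFlow := ⟨⟨.var 0, .var 0, Set.Subset.rfl⟩⟩

/-- Equality of flows up to renaming. -/
def FlowEquiv (f g : RFlow) : Prop :=
  ∃ α : ℕ ≃ ℕ, g.lhs = f.lhs.rename α ∧ g.rhs = f.rhs.rename α

/-- `r` is a resolution product of `f` and `g`: after renaming `g` apart from
`f`, the MGU `θ` of `f`'s right term and `g`'s left term exists and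
`r = θ(f.lhs) ⊣ θ(g.rhs)`. -/
def FlowCompRel (f g r : RFlow) : Prop :=
  ∃ g' : RFlow, FlowEquiv g g' ∧ Disjoint f.rhs.vars g'.lhs.vars ∧
    ∃ θ, IsMGU θ f.rhs g'.lhs ∧
      r.lhs = f.lhs.subst θ ∧ r.rhs = g'.rhs.subst θ

open Classical in
/-- The product of flows (`none` = undefined = 0). -/
noncomputable def fcomp (f g : RFlow) : Option RFlow :=
  if h : ∃ r, FlowCompRel f g r then some h.choose else none

/-- Product extended to possibly-undefined flows. -/
noncomputable def fcompO (a b : Option RFlow) : Option RFlow :=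
  a.bind fun f => b.bind fun g => fcomp f g

/-- Equality up to renaming of possibly-undefined flows. -/
def OEquiv (a b : Option RFlow) : Prop :=
  (a = none ∧ b = none) ∨ ∃ f g, a = some f ∧ b = some g ∧ FlowEquiv f g

/-! Unification by transforming systems of equations (Martelli–Montanari), processed from the
front: `x ≐ x` is dropped, `f(ts) ≐ f(us)` is decomposed into the argument equations,
`f(ts) ≐ x` is swapped, and `x ≐ u` with `x ∉ Var(u)` is eliminated by substituting `u` for `x`
in the remaining equations; for `x ≐ u` with `x` occurring properly in `u` the sizes of the two
sides of any instance differ, so there is no unifier. All steps but elimination preserve the set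
of unifiers; in an elimination an MGU `θ` of the rest gives the MGU `[x ↦ u] ; θ`, because every
unifier `θ'` of `x ≐ u` satisfies `θ' = [x ↦ u] ; θ'`. Elimination removes `x` from the
variables and the other steps decrease the total size, so the recursion terminates. -/

namespace Term

@[elab_as_elim, induction_eliminator]
theorem induction {motive : Term → Prop} (var : ∀ n, motive (.var n))
    (fn : ∀ f ts, (∀ t ∈ ts, motive t) → motive (.fn f ts)) (t : Term) : motive t :=
  Term.rec (motive_2 := fun ts => ∀ t ∈ ts, motive t) var fn
    (fun _ h => absurd h List.not_mem_nil)
    (fun _ _ ha hs _ h => (List.mem_cons.mp h).elim (· ▸ ha) (hs _)) t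

theorem substList_eq_map (θ : ℕ → Term) (ts : List Term) :
    substList θ ts = ts.map (subst θ) := by
  induction ts with
  | nil => rfl
  | cons t ts ih => simp only [substList, ih, List.map_cons]

@[simp] theorem subst_var (θ : ℕ → Term) (n : ℕ) : (var n).subst θ = θ n := rfl

@[simp] theorem subst_fn (θ : ℕ → Term) (f : ℕ) (ts : List Term) :
    (fn f ts).subst θ = fn f (ts.map (subst θ)) := by
  rw [subst, substList_eq_map]

@[simp] theorem vars_var (n : ℕ) : (var n).vars = {n} := rfl

@[simp] theorem vars_fn (f : ℕ) (ts : List Term) : (fn f ts).vars = ⋃ t ∈ ts, t.vars := by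
  rw [vars]
  induction ts with
  | nil => simp [varsList]
  | cons t ts ih => simp [varsList, ih]

theorem mem_vars_fn {f x : ℕ} {ts : List Term} : x ∈ (fn f ts).vars ↔ ∃ t ∈ ts, x ∈ t.vars := by
  simp

theorem subst_subst (σ θ : ℕ → Term) (t : Term) :
    (t.subst σ).subst θ = t.subst fun n => (σ n).subst θ := by
  induction t with
  | var n => rfl
  | fn f ts ih => simpa using List.map_congr_left ih

theorem subst_congr {σ θ : ℕ → Term} {t : Term} (h : ∀ n ∈ t.vars, σ n = θ n) :
    t.subst σ = t.subst θ := by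
  induction t with
  | var n => exact h n rfl
  | fn f ts ih =>
    simp only [vars_fn, Set.mem_iUnion₂] at h
    simpa using List.map_congr_left fun t ht => ih t ht fun n hn => h n ⟨t, ht, hn⟩

@[simp] theorem subst_var_eq_self (t : Term) : t.subst var = t := by
  induction t with
  | var n => rfl
  | fn f ts ih => simpa using List.map_congr_left ih

theorem mem_vars_subst {θ : ℕ → Term} {t : Term} {m : ℕ} :
    m ∈ (t.subst θ).vars ↔ ∃ n ∈ t.vars, m ∈ (θ n).vars := by
  induction t with
  | var n => simp
  | fn f ts ih =>
    simp only [subst_fn, vars_fn, List.mem_map, Set.mem_iUnion₂, exists_prop]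
    constructor
    · rintro ⟨_, ⟨t, ht, rfl⟩, hm⟩
      obtain ⟨n, hn, hmn⟩ := (ih t ht).mp hm
      exact ⟨n, ⟨t, ht, hn⟩, hmn⟩
    · rintro ⟨n, ⟨t, ht, hn⟩, hmn⟩
      exact ⟨_, ⟨t, ht, rfl⟩, (ih t ht).mpr ⟨n, hn, hmn⟩⟩

theorem finite_vars (t : Term) : t.vars.Finite := by
  induction t with
  | var n => simp
  | fn f ts ih => simpa using ts.finite_toSet.biUnion ih

def size : Term → ℕ
  | .var _ => 1
  | .fn _ ts => (ts.map size).sum + 1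

theorem size_pos (t : Term) : 0 < t.size := by
  cases t <;> simp [size]

theorem size_lt_size_fn {t : Term} {ts : List Term} (f : ℕ) (h : t ∈ ts) :
    t.size < (fn f ts).size := by
  have := List.le_sum_of_mem (List.mem_map_of_mem (f := size) h)
  rw [size]
  omega

theorem size_le_size_subst {θ : ℕ → Term} {t : Term} {x : ℕ} (h : x ∈ t.vars) :
    (θ x).size ≤ (t.subst θ).size := by
  induction t with
  | var n => rw [vars_var, Set.mem_singleton_iff] at h; subst h; rfl
  | fn f ts ih =>
    obtain ⟨s, hs, hx⟩ := mem_vars_fn.mp h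
    rw [subst_fn]
    exact (ih s hs hx).trans (size_lt_size_fn f (List.mem_map_of_mem hs)).le

theorem vars_subset_vars_fn {t : Term} {ts : List Term} (f : ℕ) (h : t ∈ ts) :
    t.vars ⊆ (fn f ts).vars :=
  fun _ hx => mem_vars_fn.mpr ⟨t, h, hx⟩

theorem subst_ne_of_mem_vars {θ : ℕ → Term} {t : Term} {x : ℕ} (hx : x ∈ t.vars)
    (ht : t ≠ var x) : θ x ≠ t.subst θ := by
  cases t with
  | var n => rw [vars_var, Set.mem_singleton_iff] at hx; exact absurd (congrArg var hx.symm) ht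
  | fn f ts =>
    obtain ⟨s, hs, hxs⟩ := mem_vars_fn.mp hx
    intro h
    have := (size_le_size_subst (θ := θ) hxs).trans_lt
      (size_lt_size_fn f (List.mem_map_of_mem hs))
    rw [← subst_fn, ← h] at this
    exact lt_irrefl _ this

theorem subst_update_of_notMem {t u : Term} {x : ℕ} (hx : x ∉ t.vars) :
    t.subst (Function.update var x u) = t := by
  conv_rhs => rw [← subst_var_eq_self t]
  exact subst_congr fun n hn => Function.update_of_ne (ne_of_mem_of_not_mem hn hx) _ _

theorem subst_update_subst {θ : ℕ → Term} {u : Term} {x : ℕ} (h : θ x = u.subst θ) (t : Term) :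
    (t.subst (Function.update var x u)).subst θ = t.subst θ := by
  rw [subst_subst]
  congr 1
  funext n
  rcases eq_or_ne n x with rfl | hn
  · simp [h]
  · simp [hn]

theorem vars_subst_update_subset (t u : Term) (x : ℕ) :
    (t.subst (Function.update var x u)).vars ⊆ t.vars \ {x} ∪ u.vars := by
  intro m hm
  obtain ⟨n, hn, hmn⟩ := mem_vars_subst.mp hm
  by_cases hnx : n = x <;> simp_all

end Term

open Term

def IsUnifierList (θ : ℕ → Term) (E : List (Term × Term)) : Prop :=
  ∀ p ∈ E, IsUnifier θ p.1 p.2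

def IsMGUList (θ : ℕ → Term) (E : List (Term × Term)) : Prop :=
  IsUnifierList θ E ∧ ∀ θ', IsUnifierList θ' E → InstanceOf θ' θ

def eqnsSize (E : List (Term × Term)) : ℕ :=
  (E.map fun p => p.1.size + p.2.size).sum

theorem isMGUList_singleton {θ : ℕ → Term} {t u : Term} : IsMGUList θ [(t, u)] ↔ IsMGU θ t u := by
  simp [IsMGUList, IsUnifierList, IsMGU]

theorem isMGUList_nil : IsMGUList var [] :=
  ⟨nofun, fun θ' _ => ⟨θ', fun _ => rfl⟩⟩

theorem exists_isMGUList_congr {E E' : List (Term × Term)}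
    (h : ∀ θ, IsUnifierList θ E ↔ IsUnifierList θ E') :
    (∃ θ, IsMGUList θ E) ↔ ∃ θ, IsMGUList θ E' := by
  simp only [IsMGUList, h]

theorem isUnifierList_cons {θ : ℕ → Term} {p : Term × Term} {E : List (Term × Term)} :
    IsUnifierList θ (p :: E) ↔ IsUnifier θ p.1 p.2 ∧ IsUnifierList θ E :=
  List.forall_mem_cons

theorem isUnifierList_append {θ : ℕ → Term} {E E' : List (Term × Term)} :
    IsUnifierList θ (E ++ E') ↔ IsUnifierList θ E ∧ IsUnifierList θ E' :=
  List.forall_mem_append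

theorem isUnifier_fn_fn_iff {θ : ℕ → Term} {f g : ℕ} {ts us : List Term} :
    IsUnifier θ (fn f ts) (fn g us) ↔
      f = g ∧ ts.length = us.length ∧ IsUnifierList θ (ts.zip us) := by
  rw [IsUnifier, subst_fn, subst_fn, fn.injEq, ← List.forall₂_eq_eq_eq,
    List.forall₂_map_left_iff, List.forall₂_map_right_iff, List.forall₂_iff_zip]
  simp [IsUnifierList, IsUnifier]

theorem isUnifierList_cons_self {θ : ℕ → Term} {t : Term} {E : List (Term × Term)} :
    IsUnifierList θ ((t, t) :: E) ↔ IsUnifierList θ E := by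
  simp [isUnifierList_cons, IsUnifier]

theorem isUnifierList_cons_swap {θ : ℕ → Term} {t u : Term} {E : List (Term × Term)} :
    IsUnifierList θ ((t, u) :: E) ↔ IsUnifierList θ ((u, t) :: E) := by
  simp only [isUnifierList_cons, IsUnifier, eq_comm]

theorem isUnifierList_cons_fn_fn {θ : ℕ → Term} {f : ℕ} {ts us : List Term}
    {E : List (Term × Term)} (hlen : ts.length = us.length) :
    IsUnifierList θ ((fn f ts, fn f us) :: E) ↔ IsUnifierList θ (ts.zip us ++ E) := by
  simp only [isUnifierList_cons, isUnifier_fn_fn_iff, hlen, isUnifierList_append, true_and]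

theorem isUnifierList_map_subst_update {θ : ℕ → Term} {u : Term} {x : ℕ}
    (h : θ x = u.subst θ) (E : List (Term × Term)) :
    IsUnifierList θ (E.map (Prod.map (subst (Function.update var x u))
      (subst (Function.update var x u)))) ↔ IsUnifierList θ E := by
  simp only [IsUnifierList, List.forall_mem_map, Prod.map_fst, Prod.map_snd, IsUnifier,
    subst_update_subst h]

theorem eqnsSize_lt_cons (p : Term × Term) (E : List (Term × Term)) :
    eqnsSize E < eqnsSize (p :: E) := by
  have := p.1.size_pos
  simp only [eqnsSize, List.map_cons, List.sum_cons]
  omega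

theorem eqnsSize_zip_le (ts us : List Term) :
    eqnsSize (ts.zip us) ≤ (ts.map size).sum + (us.map size).sum := by
  induction ts generalizing us with
  | nil => simp [eqnsSize]
  | cons t ts ih =>
    cases us with
    | nil => simp [eqnsSize]
    | cons u us =>
      have := ih us
      simp only [eqnsSize, List.zip_cons_cons, List.map_cons, List.sum_cons] at this ⊢
      omega

theorem eqnsSize_zip_append_lt (f g : ℕ) (ts us : List Term) (E : List (Term × Term)) :
    eqnsSize (ts.zip us ++ E) < eqnsSize ((fn f ts, fn g us) :: E) := by
  have := eqnsSize_zip_le ts us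
  simp only [eqnsSize, List.map_append, List.sum_append, List.map_cons, List.sum_cons,
    size] at this ⊢
  omega

theorem IsMGUList.cons_var {θ : ℕ → Term} {x : ℕ} {u : Term} {E : List (Term × Term)}
    (hx : x ∉ u.vars)
    (h : IsMGUList θ
      (E.map (Prod.map (subst (Function.update var x u)) (subst (Function.update var x u))))) :
    IsMGUList (fun n => (Function.update var x u n).subst θ) ((var x, u) :: E) := by
  set σ := Function.update var x u
  have subst_comp (t : Term) : t.subst (fun n => (σ n).subst θ) = (t.subst σ).subst θ :=
    (subst_subst σ θ t).symm
  obtain ⟨hθ, hθ_min⟩ := h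
  refine ⟨isUnifierList_cons.mpr ⟨?_, fun p hp => ?_⟩, fun θ' h' => ?_⟩
  · rw [IsUnifier, subst_comp, subst_comp, subst_update_of_notMem hx]
    simp [σ]
  · rw [IsUnifier, subst_comp, subst_comp]
    exact hθ _ (List.mem_map_of_mem hp)
  · obtain ⟨hθ'x, hθ'E⟩ := isUnifierList_cons.mp h'
    obtain ⟨ρ, hρ⟩ := hθ_min θ' ((isUnifierList_map_subst_update hθ'x E).mpr hθ'E)
    refine ⟨ρ, fun n => ?_⟩
    calc θ' n = (σ n).subst θ' := (subst_update_subst hθ'x (var n)).symm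
      _ = ((σ n).subst θ).subst ρ := by rw [subst_subst, ← funext hρ]

theorem exists_isMGUList_var_cons {V : Finset ℕ} {x : ℕ} {u : Term} {E : List (Term × Term)}
    (hx : x ∉ u.vars) (hV : ∀ p ∈ (var x, u) :: E, p.1.vars ∪ p.2.vars ⊆ V)
    (hE : ∃ θ, IsUnifierList θ ((var x, u) :: E))
    (ih : ∀ E' : List (Term × Term), (∀ p ∈ E', p.1.vars ∪ p.2.vars ⊆ V.erase x) →
      (∃ θ, IsUnifierList θ E') → ∃ θ, IsMGUList θ E') :
    ∃ θ, IsMGUList θ ((var x, u) :: E) := by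
  obtain ⟨θ, hθ⟩ := hE
  obtain ⟨hθx, hθE⟩ := isUnifierList_cons.mp hθ
  obtain ⟨hV_head, hV_tail⟩ := List.forall_mem_cons.mp hV
  have hu : u.vars ⊆ V := Set.subset_union_right.trans hV_head
  have vars_subst (t : Term) (ht : t.vars ⊆ V) :
      (t.subst (Function.update var x u)).vars ⊆ ↑(V.erase x) := by
    rw [Finset.coe_erase]
    exact (vars_subst_update_subset t u x).trans
      (Set.union_subset (Set.sdiff_subset_sdiff_left ht) (Set.subset_sdiff_singleton hu hx))
  have hV' : ∀ p ∈ E.map (Prod.map (subst (Function.update var x u))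
      (subst (Function.update var x u))), p.1.vars ∪ p.2.vars ⊆ V.erase x := by
    simp only [List.forall_mem_map, Prod.map_fst, Prod.map_snd]
    exact fun p hp => Set.union_subset (vars_subst _ (Set.union_subset_iff.mp (hV_tail p hp)).1)
      (vars_subst _ (Set.union_subset_iff.mp (hV_tail p hp)).2)
  obtain ⟨θ₀, h₀⟩ := ih _ hV' ⟨θ, (isUnifierList_map_subst_update hθx E).mpr hθE⟩
  exact ⟨_, h₀.cons_var hx⟩

theorem exists_isMGUList (V : Finset ℕ) :
    ∀ E : List (Term × Term), (∀ p ∈ E, p.1.vars ∪ p.2.vars ⊆ V) →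
      (∃ θ, IsUnifierList θ E) → ∃ θ, IsMGUList θ E
  | [], _, _ => ⟨var, isMGUList_nil⟩
  | (var x, u) :: E, hV, hE => by
    by_cases hxu : x ∈ u.vars
    · obtain ⟨θ, hθ⟩ := hE
      obtain rfl : u = var x := by
        by_contra hu
        exact subst_ne_of_mem_vars hxu hu (isUnifierList_cons.mp hθ).1
      rw [exists_isMGUList_congr fun _ => isUnifierList_cons_self]
      exact exists_isMGUList V E (fun p hp => hV p (.tail _ hp))
        ⟨θ, isUnifierList_cons_self.mp hθ⟩
    · have hxV : x ∈ V := hV _ List.mem_cons_self (Or.inl rfl)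
      exact exists_isMGUList_var_cons hxu hV hE
        fun E' hE' h => exists_isMGUList (V.erase x) E' hE' h
  | (fn f ts, var x) :: E, hV, hE => by
    obtain ⟨θ, hθ⟩ := hE
    have hx : x ∉ (fn f ts).vars := fun hx =>
      subst_ne_of_mem_vars hx (by simp) (isUnifierList_cons.mp hθ).1.symm
    rw [exists_isMGUList_congr fun _ => isUnifierList_cons_swap]
    have hxV : x ∈ V := hV _ List.mem_cons_self (Or.inr rfl)
    refine exists_isMGUList_var_cons hx ?_ ⟨θ, isUnifierList_cons_swap.mp hθ⟩
      fun E' hE' h => exists_isMGUList (V.erase x) E' hE' h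
    simpa only [List.forall_mem_cons, Set.union_comm] using hV
  | (fn f ts, fn g us) :: E, hV, hE => by
    obtain ⟨θ, hθ⟩ := hE
    obtain ⟨rfl, hlen, -⟩ := isUnifier_fn_fn_iff.mp (isUnifierList_cons.mp hθ).1
    rw [exists_isMGUList_congr fun _ => isUnifierList_cons_fn_fn hlen]
    refine exists_isMGUList V _ ?_ ⟨θ, (isUnifierList_cons_fn_fn hlen).mp hθ⟩
    obtain ⟨hV_head, hV_tail⟩ := List.forall_mem_cons.mp hV
    refine List.forall_mem_append.mpr ⟨fun p hp => ?_, hV_tail⟩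
    obtain ⟨hp₁, hp₂⟩ := List.of_mem_zip hp
    exact (Set.union_subset_union (vars_subset_vars_fn f hp₁) (vars_subset_vars_fn f hp₂)).trans
      hV_head
termination_by E => (V.card, eqnsSize E)
decreasing_by
  · exact Prod.Lex.right _ (eqnsSize_lt_cons _ _)
  · exact Prod.Lex.left _ _ (Finset.card_erase_lt_of_mem hxV)
  · exact Prod.Lex.left _ _ (Finset.card_erase_lt_of_mem hxV)
  · exact Prod.Lex.right _ (eqnsSize_zip_append_lt _ _ _ _ _)

/-- if two first-order terms are unifiable then they have a most
general unifier. -/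
theorem mgu_exists (t u : Term) (h : ∃ θ, IsUnifier θ t u) :
    ∃ θ, IsMGU θ t u := by
  let V := (t.finite_vars.union u.finite_vars).toFinset
  have hV : ∀ p ∈ [(t, u)], p.1.vars ∪ p.2.vars ⊆ V := by simp [V]
  simpa only [isMGUList_singleton] using
    exists_isMGUList V [(t, u)] hV (by simpa [IsUnifierList] using h)
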